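/- There exists a matrix $M \in GL_4(\mathbb{Z})$ such that $M^T (A \oplus U) M = B \oplus U$, where $A = -\begin{pmatrix} 4 & 1 \\ 1 & 12 \end{pmatrix}$, $B = -\begin{pmatrix} 6 & 1 \\ 1 & 8 \end{pmatrix}$, and $U = \begin{pmatrix} 0 & 1 \\ 1 & 0 \end{pmatrix}$. -/
import Mathlib


open Matrix

def Mmat : Matrix (Fin 2 ⊕ Fin 2) (Fin 2 ⊕ Fin 2) ℤ :=
  Matrix.fromBlocks !![-1, -1; -2, 3] !![0, 0; -1, -1] !![-5, 7; -5, 7] !![-2, -3; -3, -2]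

def Mmatinv : Matrix (Fin 2 ⊕ Fin 2) (Fin 2 ⊕ Fin 2) ℤ :=
  Matrix.fromBlocks !![-1, -5; 0, 5] !![1, 1; -1, -1] !![1, 12; 1, 12] !![-2, -3; -3, -2]

theorem stmt_12 :
    ∃ M : GL (Fin 2 ⊕ Fin 2) ℤ,
      (M : Matrix (Fin 2 ⊕ Fin 2) (Fin 2 ⊕ Fin 2) ℤ)ᵀ *
          Matrix.fromBlocks (-(!![4, 1; 1, 12] : Matrix (Fin 2) (Fin 2) ℤ)) 0 0
            (!![0, 1; 1, 0] : Matrix (Fin 2) (Fin 2) ℤ) *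
          (M : Matrix (Fin 2 ⊕ Fin 2) (Fin 2 ⊕ Fin 2) ℤ)
        = Matrix.fromBlocks (-(!![6, 1; 1, 8] : Matrix (Fin 2) (Fin 2) ℤ)) 0 0
            (!![0, 1; 1, 0] : Matrix (Fin 2) (Fin 2) ℤ) := by
  have h1 : Mmat * Mmatinv = 1 := by
    rw [Mmat, Mmatinv, Matrix.fromBlocks_multiply, ← Matrix.fromBlocks_one]
    congr 1 <;> decide
  have h2 : Mmatinv * Mmat = 1 := by
    rw [Mmat, Mmatinv, Matrix.fromBlocks_multiply, ← Matrix.fromBlocks_one]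
    congr 1 <;> decide
  refine ⟨⟨Mmat, Mmatinv, h1, h2⟩, ?_⟩
  show Mmatᵀ * _ * Mmat = _
  rw [Mmat, Matrix.fromBlocks_transpose, Matrix.fromBlocks_multiply,
    Matrix.fromBlocks_multiply]
  congr 1 <;> decide
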